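/- arXiv:2502.10818 — 2 statements merged into one kernel-verified Lean document; each statement's English description precedes it below -/
import Mathlib

section
/- Let A ∈ ℝ^{n×n} and B ∈ ℝ^{m×m} be symmetric real matrices whose eigenvalues, listed with multiplicity, are λ₁,…,λₙ and μ₁,…,μ_m respectively. Then the Kronecker product A ⊗ B is symmetric, and its multiset of eigenvalues listed with multiplicity equals the multiset {λᵢ·μⱼ : 1 ≤ i ≤ n, 1 ≤ j ≤ m}. -/
open Matrix Polynomial
open scoped Kronecker

namespace Matrix

theorem IsHermitian.kronecker {R l n : Type*} [CommMagma R] [StarMul R]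
    {A : Matrix l l R} {B : Matrix n n R} (hA : A.IsHermitian) (hB : B.IsHermitian) :
    (A ⊗ₖ B).IsHermitian := by
  rw [IsHermitian, conjTranspose_kronecker, hA.eq, hB.eq]

variable {𝕜 n m : Type*} [RCLike 𝕜] [Fintype n] [DecidableEq n] [Fintype m] [DecidableEq m]

/-- By the mixed-product rule, `U_A ⊗ₖ U_B` is unitary and conjugates `D_A ⊗ₖ D_B` to `A ⊗ₖ B`,
where `A = U_A D_A U_Aᴴ` and `B = U_B D_B U_Bᴴ` are the spectral decompositions. -/
theorem IsHermitian.charpoly_kronecker {A : Matrix n n 𝕜} {B : Matrix m m 𝕜}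
    (hA : A.IsHermitian) (hB : B.IsHermitian) :
    (A ⊗ₖ B).charpoly =
      ∏ p : n × m, (X - C ((hA.eigenvalues p.1 * hB.eigenvalues p.2 : ℝ) : 𝕜)) := by
  have hU : (star (hA.eigenvectorUnitary : Matrix n n 𝕜) ⊗ₖ
      star (hB.eigenvectorUnitary : Matrix m m 𝕜)) *
      ((hA.eigenvectorUnitary : Matrix n n 𝕜) ⊗ₖ (hB.eigenvectorUnitary : Matrix m m 𝕜)) = 1 := by
    rw [← mul_kronecker_mul, Unitary.coe_star_mul_self, Unitary.coe_star_mul_self,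
      one_kronecker_one]
  conv_lhs => rw [hA.spectral_theorem, hB.spectral_theorem]
  rw [Unitary.conjStarAlgAut_apply, Unitary.conjStarAlgAut_apply, mul_kronecker_mul,
    mul_kronecker_mul, charpoly_mul_comm, ← mul_assoc, hU, one_mul,
    diagonal_kronecker_diagonal, charpoly_diagonal]
  simp

theorem IsHermitian.map_eigenvalues_eq_of_charpoly_eq_prod {ι : Type*} [Fintype ι]
    {M : Matrix n n 𝕜} (hM : M.IsHermitian) {d : ι → ℝ}
    (h : M.charpoly = ∏ i, (X - C (d i : 𝕜))) :
    Finset.univ.val.map hM.eigenvalues = Finset.univ.val.map d := by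
  apply Multiset.map_injective (RCLike.ofReal_injective (K := 𝕜))
  rw [Multiset.map_map, ← hM.roots_charpoly_eq_eigenvalues, h,
    roots_prod _ _ (Finset.prod_ne_zero_iff.mpr fun i _ => X_sub_C_ne_zero _)]
  simp

end Matrix

/-- If `A` and `B` are real symmetric (Hermitian) matrices, then `A ⊗ B` is
symmetric and its multiset of eigenvalues (with multiplicity) is the multiset
of all products `λᵢ * μⱼ` of eigenvalues of `A` and `B`. -/
theorem kronecker_isHermitian_and_eigenvalues
    {n m : Type*} [Fintype n] [DecidableEq n] [Fintype m] [DecidableEq m]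
    (A : Matrix n n ℝ) (B : Matrix m m ℝ)
    (hA : A.IsHermitian) (hB : B.IsHermitian) :
    ∃ hAB : (A ⊗ₖ B).IsHermitian,
      (Finset.univ.val.map hAB.eigenvalues) =
        (Finset.univ.val.map
          (fun p : n × m => hA.eigenvalues p.1 * hB.eigenvalues p.2)) :=
  ⟨hA.kronecker hB, (hA.kronecker hB).map_eigenvalues_eq_of_charpoly_eq_prod
    (hA.charpoly_kronecker hB)⟩
end

section
/- Let G be a finite simple graph with vertex set V and edge set E(G), and let node feature configurations live in H = (V → ℝ^d) with the ℓ² norm ‖H‖ = (Σ_{v∈V} ‖H(v)‖²)^{1/2}. Let ε ∈ (0,1) and let (fₖ)_{k≥1} be a sequence of maps H → H, each Lipschitz with constant 1−ε and each fixing the origin. Then for every H ∈ H, the Dirichlet energy of the iterated compositions tends to zero: E((f_K ∘ ⋯ ∘ f₁)(H)) → 0 as K → ∞, where E(X) = Σ_{{u,v} ∈ E(G)} ‖X(u) − X(v)‖². -/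
/-- Iterated composition: `compSeq f K = f_{K-1} ∘ ⋯ ∘ f_0` (with
`compSeq f 0 = id`), i.e. the composition of the first `K` maps. -/
def compSeq {E : Type*} (f : ℕ → E → E) : ℕ → E → E
  | 0 => id
  | k + 1 => f k ∘ compSeq f k

/-- Dirichlet energy of a feature configuration `X : V → ℝ^d` over a graph:
the sum over unordered edges `{u,v}` of `‖X u - X v‖²`. -/
noncomputable def dirichletEnergy {V : Type*} [Fintype V] [DecidableEq V] {d : ℕ}
    (G : SimpleGraph V) [DecidableRel G.Adj]
    (X : V → EuclideanSpace ℝ (Fin d)) : ℝ :=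
  ∑ e ∈ G.edgeFinset,
    Sym2.lift ⟨fun u v => ‖X u - X v‖ ^ 2, fun u v => by simp [norm_sub_rev]⟩ e

/-! The maps fix the origin and contract the ℓ² norm by `1 - ε`, so the `K`-th composite has
ℓ² norm at most `(1 - ε)^K ‖H‖` and tends to `0`; the Dirichlet energy is a continuous
function of the configuration that vanishes at `0`. -/

open Filter Topology

section compSeq

variable {E F : Type*}

theorem compSeq_conj (e : E ≃ F) (f : ℕ → E → E) (K : ℕ) (x : E) :
    compSeq (fun k => e ∘ f k ∘ e.symm) K (e x) = e (compSeq f K x) := by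
  induction K with
  | zero => rfl
  | succ K ih => simp [compSeq, ih]

variable [SeminormedAddGroup E] {f : ℕ → E → E} {c : ℝ}

theorem norm_compSeq_le (hc : 0 ≤ c) (hf : ∀ k x, ‖f k x‖ ≤ c * ‖x‖) (K : ℕ) (x : E) :
    ‖compSeq f K x‖ ≤ c ^ K * ‖x‖ := by
  induction K with
  | zero => simp [compSeq]
  | succ K ih =>
    calc ‖f K (compSeq f K x)‖ ≤ c * ‖compSeq f K x‖ := hf K _
      _ ≤ c * (c ^ K * ‖x‖) := by gcongr
      _ = c ^ (K + 1) * ‖x‖ := by ring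

theorem tendsto_compSeq_zero (hc₀ : 0 ≤ c) (hc₁ : c < 1) (hf : ∀ k x, ‖f k x‖ ≤ c * ‖x‖)
    (x : E) : Tendsto (fun K => compSeq f K x) atTop (𝓝 0) := by
  refine squeeze_zero_norm (norm_compSeq_le hc₀ hf · x) ?_
  simpa using (tendsto_pow_atTop_nhds_zero_of_lt_one hc₀ hc₁).mul_const ‖x‖

end compSeq

section dirichletEnergy

variable {V : Type*} [Fintype V] [DecidableEq V] {d : ℕ} (G : SimpleGraph V) [DecidableRel G.Adj]

theorem continuous_dirichletEnergy :
    Continuous (dirichletEnergy (d := d) G) := by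
  refine continuous_finsetSum _ fun e _ => ?_
  induction e using Sym2.ind with
  | _ u v => simp only [Sym2.lift_mk]; fun_prop

theorem dirichletEnergy_zero : dirichletEnergy (d := d) G 0 = 0 := by
  refine Finset.sum_eq_zero fun e _ => ?_
  induction e using Sym2.ind with
  | _ u v => simp

end dirichletEnergy

/-- If `(fₖ)` is a sequence of maps on the feature space `V → ℝ^d` (with the
ℓ² norm `‖X‖ = (Σ_v ‖X v‖²)^{1/2}`), each Lipschitz with constant `1 - ε`
(for `ε ∈ (0,1)`) and fixing the origin, then the Dirichlet energy of the
iterated compositions tends to zero: `E((f_K ∘ ⋯ ∘ f_1) H) → 0` as `K → ∞`. -/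
theorem dirichletEnergy_compSeq_tendsto_zero
    {V : Type*} [Fintype V] [DecidableEq V] {d : ℕ}
    (G : SimpleGraph V) [DecidableRel G.Adj]
    (ε : ℝ) (hε : ε ∈ Set.Ioo (0 : ℝ) 1)
    (f : ℕ → (V → EuclideanSpace ℝ (Fin d)) → (V → EuclideanSpace ℝ (Fin d)))
    (hlip : ∀ k, ∀ x y : V → EuclideanSpace ℝ (Fin d),
      Real.sqrt (∑ v : V, ‖f k x v - f k y v‖ ^ 2) ≤
        (1 - ε) * Real.sqrt (∑ v : V, ‖x v - y v‖ ^ 2))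
    (hfix : ∀ k, f k 0 = 0)
    (H : V → EuclideanSpace ℝ (Fin d)) :
    Filter.Tendsto (fun K => dirichletEnergy G (compSeq f K H))
      Filter.atTop (nhds 0) := by
  -- transport to `PiLp 2`, where the ℓ² norm is the norm
  let e := (WithLp.equiv 2 (V → EuclideanSpace ℝ (Fin d))).symm
  have hcontr : ∀ k x, ‖(e ∘ f k ∘ e.symm) x‖ ≤ (1 - ε) * ‖x‖ := fun k x => by
    simpa [PiLp.norm_eq_of_L2, e, hfix k] using hlip k (WithLp.ofLp x) 0
  have hcompSeq : Tendsto (fun K => compSeq f K H) atTop (𝓝 0) := by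
    have := tendsto_compSeq_zero (by linarith [hε.2]) (by linarith [hε.1]) hcontr (e H)
    simp only [compSeq_conj] at this
    exact ((PiLp.continuous_ofLp 2 _).tendsto 0).comp this
  exact ((continuous_dirichletEnergy G).tendsto' 0 0 (dirichletEnergy_zero G)).comp hcompSeq
end
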